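/- arXiv:2604.27482 — 5 statements merged into one kernel-verified Lean document; each statement's English description precedes it below -/
import Mathlib

section
/- For any complex d×d matrix σ with σ² = I, any nonzero real x, and any β > 0, setting κ = coth(β·|x|), the two-term LCU block equals the rescaled imaginary-time factor: (κ·I − sgn(x)·σ) / (κ + 1) = e^{−β·|x|} · Matrix.exp(−β·x·σ). -/
/-! Since `σ² = 1`, the even and odd parts of the exponential series give
`exp (c • σ) = cosh c • 1 + sinh c • σ`. With `t = β|x|` one has `cosh (βx) = cosh t`,
`sinh (βx) = sgn x · sinh t` and `(coth t + 1)⁻¹ = e^{-t} sinh t`, so both sides are the same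
combination of `1` and `σ`. -/

open NormedSpace

theorem exp_smul_of_sq_eq_one {𝔸 : Type*} [Ring 𝔸] [Algebra ℂ 𝔸] [TopologicalSpace 𝔸]
    [IsTopologicalRing 𝔸] [ContinuousSMul ℂ 𝔸] [T2Space 𝔸] {a : 𝔸} (ha : a ^ 2 = 1) (c : ℂ) :
    exp (c • a) = Complex.cosh c • (1 : 𝔸) + Complex.sinh c • a := by
  rw [exp_eq_tsum ℂ]
  refine HasSum.tsum_eq <| HasSum.even_add_odd ?_ ?_
  · convert (Complex.hasSum_cosh c).smul_const (1 : 𝔸) using 2 with n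
    rw [smul_pow, pow_mul a, ha, one_pow, smul_smul, div_eq_inv_mul]
  · convert (Complex.hasSum_sinh c).smul_const a using 2 with n
    rw [smul_pow, pow_succ a, pow_mul a, ha, one_pow, one_mul, smul_smul, div_eq_inv_mul]

namespace Real

theorem inv_coth_add_one {t : ℝ} (ht : sinh t ≠ 0) :
    (cosh t / sinh t + 1)⁻¹ = exp (-t) * sinh t := by
  rw [div_add_one ht, inv_div, cosh_add_sinh, exp_neg, div_eq_inv_mul]

theorem inv_coth_add_one_mul_coth {t : ℝ} (ht : sinh t ≠ 0) :
    (cosh t / sinh t + 1)⁻¹ * (cosh t / sinh t) = exp (-t) * cosh t := by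
  rw [inv_coth_add_one ht, mul_assoc, mul_div_cancel₀ _ ht]

theorem cosh_mul_abs (β x : ℝ) : cosh (β * |x|) = cosh (β * x) := by
  rcases abs_choice x with h | h <;> simp [h]

theorem sinh_mul_eq_div_abs_mul_sinh_mul_abs (β x : ℝ) :
    sinh (β * x) = x / |x| * sinh (β * |x|) := by
  rcases lt_trichotomy x 0 with h | rfl | h
  · simp [abs_of_neg h, h.ne]
  · simp
  · simp [abs_of_pos h, h.ne']

end Real

/-- For any complex d×d matrix σ with σ² = I, any nonzero real x, and any β > 0,
setting `κ = coth(β·|x|) = cosh(β·|x|)/sinh(β·|x|)`, the two-term LCU block equals the rescaled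
imaginary-time factor: `(κ·I − sgn(x)·σ)/(κ + 1) = e^{−β·|x|} · exp(−β·x·σ)`. -/
theorem lcu_block_eq_rescaled_ite_factor {d : ℕ} (σ : Matrix (Fin d) (Fin d) ℂ)
    (hσ : σ ^ 2 = 1) (x : ℝ) (hx : x ≠ 0) (β : ℝ) (hβ : 0 < β) :
    (((Real.cosh (β * |x|) / Real.sinh (β * |x|) + 1 : ℝ) : ℂ))⁻¹ •
      (((Real.cosh (β * |x|) / Real.sinh (β * |x|) : ℝ) : ℂ) •
          (1 : Matrix (Fin d) (Fin d) ℂ) -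
        ((x / |x| : ℝ) : ℂ) • σ) =
      ((Real.exp (-(β * |x|)) : ℝ) : ℂ) •
        NormedSpace.exp (((-(β * x) : ℝ) : ℂ) • σ) := by
  have hsinh : Real.sinh (β * |x|) ≠ 0 := (Real.sinh_pos_iff.mpr (by positivity)).ne'
  rw [exp_smul_of_sq_eq_one hσ, ← Complex.ofReal_cosh, ← Complex.ofReal_sinh, Real.cosh_neg,
    Real.sinh_neg, ← Real.cosh_mul_abs β x, Real.sinh_mul_eq_div_abs_mul_sinh_mul_abs β x, smul_sub,
    smul_smul, smul_smul, ← Complex.ofReal_inv, ← Complex.ofReal_mul, ← Complex.ofReal_mul,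
    Real.inv_coth_add_one_mul_coth hsinh, Real.inv_coth_add_one hsinh]
  push_cast
  module
end

section
/- For a commuting PUBO Hamiltonian H = Σ_{μ∈ι} x_μ σ_μ with W = Σ_μ |x_μ| and any β ≥ 0, the block-encoded operator M(β) = e^{−β·W} · Matrix.exp(−β·H) has operator norm at most 1. -/
/-!
Each `σ μ` is a self-adjoint involution, hence has operator norm at most `1`, so
`‖β H‖ ≤ β W`. Bounding the exponential series termwise gives `‖exp (-β H)‖ ≤ e^{β W}`,
which the prefactor `e^{-β W}` cancels.
-/

open scoped Matrix.Norms.L2Operator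

/-- The ℓ²→ℓ² operator norm of a complex d×d matrix. -/
noncomputable def l2OpNorm {d : ℕ} (M : Matrix (Fin d) (Fin d) ℂ) : ℝ :=
  ‖LinearMap.toContinuousLinearMap (Matrix.toEuclideanLin M)‖

namespace CStarRing

variable {E : Type*} [NormedRing E] [StarRing E] [CStarRing E]

theorem norm_one_le : ‖(1 : E)‖ ≤ 1 := by
  rcases subsingleton_or_nontrivial E with hE | hE
  · simp [Subsingleton.elim (1 : E) 0]
  · exact norm_one.le

end CStarRing

theorem IsSelfAdjoint.norm_le_one_of_sq_eq_one {E : Type*} [NormedRing E] [StarRing E]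
    [CStarRing E] {u : E} (hu : IsSelfAdjoint u) (hsq : u ^ 2 = 1) : ‖u‖ ≤ 1 := by
  have h : ‖u‖ ^ 2 ≤ 1 := by
    rw [← hu.norm_mul_self, ← sq, hsq]
    exact CStarRing.norm_one_le
  nlinarith [norm_nonneg u]

theorem norm_sum_smul_le_sum_norm_of_norm_le_one {𝕜 E ι : Type*} [NormedField 𝕜]
    [SeminormedAddCommGroup E] [NormedSpace 𝕜 E] (s : Finset ι) (c : ι → 𝕜) (v : ι → E)
    (hv : ∀ i ∈ s, ‖v i‖ ≤ 1) : ‖∑ i ∈ s, c i • v i‖ ≤ ∑ i ∈ s, ‖c i‖ :=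
  (norm_sum_le _ _).trans <| Finset.sum_le_sum fun i hi => by
    rw [norm_smul]
    exact mul_le_of_le_one_right (norm_nonneg _) (hv i hi)

namespace NormedSpace

variable {𝔸 : Type*} [NormedRing 𝔸]

theorem norm_exp_le_exp_norm (𝕂 : Type*) [RCLike 𝕂] [NormedAlgebra 𝕂 𝔸]
    (h1 : ‖(1 : 𝔸)‖ ≤ 1) (a : 𝔸) : ‖exp a‖ ≤ Real.exp ‖a‖ := by
  have hterm (n : ℕ) : ‖(n.factorial⁻¹ : 𝕂) • a ^ n‖ ≤ ‖a‖ ^ n / n.factorial := by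
    have hpow : ‖a ^ n‖ ≤ ‖a‖ ^ n := by
      rcases n.eq_zero_or_pos with rfl | hn
      · simpa using h1
      · exact norm_pow_le' a hn
    rw [norm_smul, norm_inv, RCLike.norm_natCast, inv_mul_eq_div]
    gcongr
  calc ‖exp a‖ = ‖∑' n : ℕ, (n.factorial⁻¹ : 𝕂) • a ^ n‖ := by rw [exp_eq_tsum 𝕂]
    _ ≤ ∑' n : ℕ, ‖(n.factorial⁻¹ : 𝕂) • a ^ n‖ :=
      norm_tsum_le_tsum_norm (norm_expSeries_summable' a)
    _ ≤ ∑' n : ℕ, ‖a‖ ^ n / n.factorial :=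
      (norm_expSeries_summable' a).tsum_le_tsum hterm (Real.summable_pow_div_factorial ‖a‖)
    _ = Real.exp ‖a‖ := by rw [Real.exp_eq_exp_ℝ, exp_eq_tsum_div]

theorem norm_real_exp_neg_smul_exp_le_one (𝕂 : Type*) [RCLike 𝕂] [NormedAlgebra 𝕂 𝔸]
    (h1 : ‖(1 : 𝔸)‖ ≤ 1) {a : 𝔸} {r : ℝ} (ha : ‖a‖ ≤ r) :
    ‖((Real.exp (-r) : ℝ) : 𝕂) • exp a‖ ≤ 1 := by
  rw [norm_smul, RCLike.norm_ofReal, abs_of_pos (Real.exp_pos _)]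
  calc Real.exp (-r) * ‖exp a‖ ≤ Real.exp (-r) * Real.exp r := by
        gcongr
        exact (norm_exp_le_exp_norm 𝕂 h1 a).trans (Real.exp_le_exp.mpr ha)
    _ = 1 := by rw [← Real.exp_add, neg_add_cancel, Real.exp_zero]

end NormedSpace

theorem block_encoded_ite_contraction_general {d : ℕ} {ι : Type*} [Fintype ι]
    (x : ι → ℝ)
    (σ : ι → Matrix (Fin d) (Fin d) ℂ)
    (hherm : ∀ μ, (σ μ).IsHermitian)
    (hinv : ∀ μ, σ μ ^ 2 = 1)
    (β : ℝ) (hβ : 0 ≤ β) :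
    l2OpNorm (((Real.exp (-(β * ∑ μ, |x μ|)) : ℝ) : ℂ) •
        NormedSpace.exp ((-(β : ℂ)) • ∑ μ, (x μ : ℂ) • σ μ)) ≤ 1 := by
  have hσ (μ : ι) : ‖σ μ‖ ≤ 1 := (hherm μ).isSelfAdjoint.norm_le_one_of_sq_eq_one (hinv μ)
  have hH : ‖∑ μ, (x μ : ℂ) • σ μ‖ ≤ ∑ μ, |x μ| := by
    simpa using norm_sum_smul_le_sum_norm_of_norm_le_one Finset.univ (fun μ => (x μ : ℂ)) σ
      fun μ _ => hσ μ
  have hβH : ‖(-(β : ℂ)) • ∑ μ, (x μ : ℂ) • σ μ‖ ≤ β * ∑ μ, |x μ| := by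
    rw [norm_smul, norm_neg, Complex.norm_real, Real.norm_of_nonneg hβ]
    exact mul_le_mul_of_nonneg_left hH hβ
  -- `l2OpNorm M` is definitionally `‖M‖` for the scoped ℓ² operator norm on matrices.
  exact NormedSpace.norm_real_exp_neg_smul_exp_le_one ℂ CStarRing.norm_one_le hβH

/-- For a commuting PUBO Hamiltonian `H = ∑ μ, x μ • σ μ` with
`W = ∑ μ, |x μ|` and any β ≥ 0, the block-encoded operator
`M(β) = e^{−β·W} · exp(−β·H)` has ℓ² operator norm at most 1. -/
theorem block_encoded_ite_contraction {d : ℕ} {ι : Type*} [Fintype ι] [Nonempty ι]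
    (x : ι → ℝ) (hx : ∀ μ, x μ ≠ 0)
    (σ : ι → Matrix (Fin d) (Fin d) ℂ)
    (hherm : ∀ μ, (σ μ).IsHermitian)
    (hcomm : ∀ μ ν, Commute (σ μ) (σ ν))
    (hinv : ∀ μ, σ μ ^ 2 = 1)
    (β : ℝ) (hβ : 0 ≤ β) :
    l2OpNorm (((Real.exp (-(β * ∑ μ, |x μ|)) : ℝ) : ℂ) •
        NormedSpace.exp ((-(β : ℂ)) • ∑ μ, (x μ : ℂ) • σ μ)) ≤ 1 :=
  block_encoded_ite_contraction_general x σ hherm hinv β hβ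
end

section
/- (Corollary: gap bound on fidelity.) In the spectral setup, assume there exists an index k with E_k > E₀, and let Δ := min{E_k − E₀ : E_k > E₀} > 0 be the spectral gap. Then for every β ≥ 0, the fidelity satisfies F(β) ≥ γ₀ / (γ₀ + (1 − γ₀)·e^{−2βΔ}). -/
/-! Split `∑ p_k e^{−2βE_k}` into the ground part `γ₀ e^{−2βE₀}` and the excited part. Every
excited level lies at least `Δ` above `E₀`, so for `β ≥ 0` the excited part is at most
`(1 − γ₀) e^{−2β(E₀+Δ)}`; dividing the ground part by this upper bound on the whole sum gives
the claim. -/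

open Classical in
/-- LCU success probability `P(β) = e^{−2βW}·∑_k p_k·e^{−2βE_k}`. -/
noncomputable def Psucc {d : ℕ} (E p : Fin d → ℝ) (W β : ℝ) : ℝ :=
  Real.exp (-(2 * β * W)) * ∑ k, p k * Real.exp (-(2 * β * E k))

open Classical in
/-- Ground overlap `γ₀ = ∑_{k : E_k = E₀} p_k`. -/
noncomputable def gammaZero {d : ℕ} (E p : Fin d → ℝ) (E₀ : ℝ) : ℝ :=
  ∑ k ∈ Finset.univ.filter fun k => E k = E₀, p k

open Classical in
/-- Ground-subspace fidelity `F(β) = γ₀·e^{−2βE₀} / ∑_k p_k·e^{−2βE_k}`. -/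
noncomputable def Fid {d : ℕ} (E p : Fin d → ℝ) (E₀ β : ℝ) : ℝ :=
  gammaZero E p E₀ * Real.exp (-(2 * β * E₀)) /
    ∑ k, p k * Real.exp (-(2 * β * E k))

open Finset Real

section Fidelity

variable {d : ℕ} {E p : Fin d → ℝ} {E₀ : ℝ}

lemma gammaZero_nonneg (hp : ∀ k, 0 ≤ p k) : 0 ≤ gammaZero E p E₀ :=
  sum_nonneg fun k _ => hp k

lemma gammaZero_add_sum_excited (E p : Fin d → ℝ) (E₀ : ℝ) :
    gammaZero E p E₀ + ∑ k ∈ univ.filter (fun k => E k ≠ E₀), p k = ∑ k, p k :=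
  sum_filter_add_sum_filter_not _ _ _

lemma sum_mul_exp_eq_gammaZero_mul_add_sum_excited (E p : Fin d → ℝ) (E₀ β : ℝ) :
    ∑ k, p k * exp (-(2 * β * E k)) =
      gammaZero E p E₀ * exp (-(2 * β * E₀)) +
        ∑ k ∈ univ.filter (fun k => E k ≠ E₀), p k * exp (-(2 * β * E k)) := by
  rw [← sum_filter_add_sum_filter_not univ (fun k => E k = E₀), gammaZero, sum_mul]
  congr 1
  exact sum_congr rfl fun k hk => by rw [(mem_filter.mp hk).2]

lemma add_le_of_mem_lowerBounds_gap {Δ : ℝ}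
    (hΔ : Δ ∈ lowerBounds ((fun k => E k - E₀) '' {k | E₀ < E k}))
    (hE₀le : ∀ k, E₀ ≤ E k) {k : Fin d} (hk : E k ≠ E₀) : E₀ + Δ ≤ E k := by
  have := hΔ ⟨k, lt_of_le_of_ne (hE₀le k) hk.symm, rfl⟩
  linarith

lemma sum_excited_mul_exp_le {Δ β : ℝ} (hp : ∀ k, 0 ≤ p k) (hβ : 0 ≤ β)
    (hgap : ∀ k, E k ≠ E₀ → E₀ + Δ ≤ E k) :
    ∑ k ∈ univ.filter (fun k => E k ≠ E₀), p k * exp (-(2 * β * E k)) ≤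
      (∑ k ∈ univ.filter (fun k => E k ≠ E₀), p k) * exp (-(2 * β * (E₀ + Δ))) := by
  rw [sum_mul]
  refine sum_le_sum fun k hk => mul_le_mul_of_nonneg_left ?_ (hp k)
  have := hgap k (mem_filter.mp hk).2
  exact exp_le_exp.mpr (by nlinarith)

end Fidelity

lemma div_le_mul_div_of_mul_le_of_le_mul {γ a S D : ℝ} (hγ : 0 ≤ γ) (ha : 0 < a)
    (hlow : γ * a ≤ S) (hup : S ≤ a * D) : γ / D ≤ γ * a / S := by
  rcases hγ.eq_or_lt with rfl | hγpos
  · simp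
  have hS : 0 < S := (mul_pos hγpos ha).trans_le hlow
  calc γ / D = γ * a / (a * D) := by rw [mul_comm a D, mul_div_mul_right _ _ ha.ne']
    _ ≤ γ * a / S := div_le_div_of_nonneg_left (mul_pos hγpos ha).le hS hup

theorem gap_bound_on_fidelity_general {d : ℕ} (E p : Fin d → ℝ)
    (hp : ∀ k, 0 ≤ p k) (hpsum : ∑ k, p k = 1)
    (E₀ : ℝ) (hE₀le : ∀ k, E₀ ≤ E k)
    (Δ : ℝ) (hΔ : IsLeast ((fun k => E k - E₀) '' {k | E₀ < E k}) Δ)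
    (β : ℝ) (hβ : 0 ≤ β) :
    gammaZero E p E₀ /
        (gammaZero E p E₀ + (1 - gammaZero E p E₀) * Real.exp (-(2 * β * Δ))) ≤
      Fid E p E₀ β := by
  have hexcited : ∑ k ∈ univ.filter (fun k => E k ≠ E₀), p k = 1 - gammaZero E p E₀ := by
    linarith [gammaZero_add_sum_excited E p E₀]
  have hgap : ∀ k, E k ≠ E₀ → E₀ + Δ ≤ E k := fun _ => add_le_of_mem_lowerBounds_gap hΔ.2 hE₀le
  have hbound := sum_excited_mul_exp_le hp hβ hgap
  rw [hexcited] at hbound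
  rw [Fid, sum_mul_exp_eq_gammaZero_mul_add_sum_excited E p E₀ β]
  refine div_le_mul_div_of_mul_le_of_le_mul (gammaZero_nonneg hp) (exp_pos _) ?_ ?_
  · exact le_add_of_nonneg_right (sum_nonneg fun k _ => mul_nonneg (hp k) (exp_pos _).le)
  · calc _ ≤ gammaZero E p E₀ * exp (-(2 * β * E₀)) +
          (1 - gammaZero E p E₀) * exp (-(2 * β * (E₀ + Δ))) := by gcongr
      _ = _ := by
        rw [show -(2 * β * (E₀ + Δ)) = -(2 * β * E₀) + -(2 * β * Δ) by ring, exp_add]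
        ring

/-- Corollary: gap bound on fidelity: in the spectral setup (energies `E`,
minimum `E₀`, weights `p` nonnegative summing to one), if some level lies strictly above
`E₀` and `Δ = min {E_k − E₀ : E_k > E₀} > 0` is the spectral gap, then for every `β ≥ 0`,
`F(β) ≥ γ₀ / (γ₀ + (1 − γ₀)·e^{−2βΔ})`. -/
theorem gap_bound_on_fidelity {d : ℕ} (hd : 1 ≤ d) (E p : Fin d → ℝ)
    (hp : ∀ k, 0 ≤ p k) (hpsum : ∑ k, p k = 1)
    (E₀ : ℝ) (hE₀le : ∀ k, E₀ ≤ E k) (hE₀mem : ∃ k, E k = E₀)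
    (hex : ∃ k, E₀ < E k)
    (Δ : ℝ) (hΔ : IsLeast ((fun k => E k - E₀) '' {k | E₀ < E k}) Δ) (hΔpos : 0 < Δ)
    (β : ℝ) (hβ : 0 ≤ β) :
    gammaZero E p E₀ /
        (gammaZero E p E₀ + (1 - gammaZero E p E₀) * Real.exp (-(2 * β * Δ))) ≤
      Fid E p E₀ β :=
  gap_bound_on_fidelity_general E p hp hpsum E₀ hE₀le Δ hΔ β hβ
end

section
/- (Corollary: gap-based sufficient β for target fidelity.) In the spectral setup, assume there exists an index k with E_k > E₀, let Δ := min{E_k − E₀ : E_k > E₀} > 0, and assume 0 < γ₀ < 1 and γ₀ < F̄ < 1. If β ≥ (1/(2Δ)) · log( F̄·(1 − γ₀) / (γ₀·(1 − F̄)) ), then F(β) ≥ F̄. -/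
/-!
Split `∑_k p_k e^{-2βE_k}` into the ground part `γ₀ e^{-2βE₀}` and the excited part. Every
excited level lies at least `Δ` above `E₀`, so for `β ≥ 0` the excited part is at most
`(1 - γ₀) e^{-2βE₀} e^{-2βΔ}`, whence `F(β) ≥ γ₀ / (γ₀ + (1 - γ₀) e^{-2βΔ})`. The hypothesis on
`β` says exactly that `e^{-2βΔ} ≤ γ₀ (1 - F̄) / (F̄ (1 - γ₀))`, which makes this lower bound at
least `F̄`.
-/

open Real

section Spectral

variable {d : ℕ} (E p : Fin d → ℝ) (E₀ : ℝ)

open Classical in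
theorem sum_mul_comp_eq_gammaZero_mul_add (f : ℝ → ℝ) :
    ∑ k, p k * f (E k) =
      gammaZero E p E₀ * f E₀ + ∑ k ∈ Finset.univ.filter (fun k => E k ≠ E₀), p k * f (E k) := by
  rw [← Finset.sum_filter_add_sum_filter_not Finset.univ (fun k => E k = E₀), gammaZero,
    Finset.sum_mul]
  congr 1
  exact Finset.sum_congr rfl fun k hk => by rw [(Finset.mem_filter.1 hk).2]

variable {E p E₀}

theorem gammaZero_mul_exp_le_sum (hp : ∀ k, 0 ≤ p k) (β : ℝ) :
    gammaZero E p E₀ * exp (-(2 * β * E₀)) ≤ ∑ k, p k * exp (-(2 * β * E k)) := by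
  rw [sum_mul_comp_eq_gammaZero_mul_add E p E₀ fun e => exp (-(2 * β * e))]
  exact le_add_of_nonneg_right (Finset.sum_nonneg fun k _ => mul_nonneg (hp k) (exp_pos _).le)

theorem sum_mul_exp_le_of_gap (hp : ∀ k, 0 ≤ p k) (hpsum : ∑ k, p k = 1)
    (hE₀le : ∀ k, E₀ ≤ E k) {Δ : ℝ} (hgap : ∀ k, E₀ < E k → Δ ≤ E k - E₀) {β : ℝ}
    (hβ : 0 ≤ β) :
    ∑ k, p k * exp (-(2 * β * E k)) ≤
      exp (-(2 * β * E₀)) * (gammaZero E p E₀ + (1 - gammaZero E p E₀) * exp (-(2 * β * Δ))) := by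
  classical
  have hexcited : 1 - gammaZero E p E₀ = ∑ k ∈ Finset.univ.filter (fun k => E k ≠ E₀), p k := by
    have := sum_mul_comp_eq_gammaZero_mul_add E p E₀ fun _ => 1
    simp only [mul_one, hpsum] at this
    linarith
  rw [sum_mul_comp_eq_gammaZero_mul_add E p E₀ fun e => exp (-(2 * β * e)), hexcited,
    Finset.sum_mul, mul_add, mul_comm (exp _) (gammaZero E p E₀), add_le_add_iff_left, Finset.mul_sum]
  refine Finset.sum_le_sum fun k hk => ?_
  have hΔk : Δ ≤ E k - E₀ := hgap k ((hE₀le k).lt_of_ne' (Finset.mem_filter.1 hk).2)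
  rw [mul_left_comm, ← exp_add]
  gcongr
  · exact hp k
  · nlinarith

theorem div_ground_add_excited_le_fid (hp : ∀ k, 0 ≤ p k) (hpsum : ∑ k, p k = 1)
    (hE₀le : ∀ k, E₀ ≤ E k) {Δ : ℝ} (hgap : ∀ k, E₀ < E k → Δ ≤ E k - E₀) {β : ℝ}
    (hβ : 0 ≤ β) (hγ : 0 < gammaZero E p E₀) :
    gammaZero E p E₀ / (gammaZero E p E₀ + (1 - gammaZero E p E₀) * exp (-(2 * β * Δ))) ≤
      Fid E p E₀ β := by
  have hsum_pos : 0 < ∑ k, p k * exp (-(2 * β * E k)) :=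
    (mul_pos hγ (exp_pos _)).trans_le (gammaZero_mul_exp_le_sum hp β)
  rw [Fid, ← mul_div_mul_right _ _ (exp_pos (-(2 * β * E₀))).ne', mul_comm (_ + _)]
  exact div_le_div_of_nonneg_left (by positivity) hsum_pos
    (sum_mul_exp_le_of_gap hp hpsum hE₀le hgap hβ)

end Spectral

theorem le_div_add_mul_of_mul_le {γ F x : ℝ} (hγ : 0 < γ) (hγ1 : γ ≤ 1) (hx : 0 ≤ x)
    (h : F * (1 - γ) * x ≤ γ * (1 - F)) : F ≤ γ / (γ + (1 - γ) * x) := by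
  rw [le_div_iff₀ (by nlinarith)]
  linarith

theorem mul_exp_neg_le_of_log_div_le {a b Δ β : ℝ} (ha : 0 < a) (hb : 0 < b) (hΔ : 0 < Δ)
    (h : 1 / (2 * Δ) * log (a / b) ≤ β) : a * exp (-(2 * β * Δ)) ≤ b := by
  have hlog : log (a / b) ≤ 2 * β * Δ := by
    rw [div_mul_eq_mul_div, one_mul, div_le_iff₀ (by positivity)] at h
    linarith
  rw [log_le_iff_le_exp (by positivity), div_le_iff₀ hb] at hlog
  rw [exp_neg, ← div_eq_mul_inv, div_le_iff₀ (exp_pos _)]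
  linarith

theorem gap_based_sufficient_beta_general {d : ℕ} (E p : Fin d → ℝ)
    (hp : ∀ k, 0 ≤ p k) (hpsum : ∑ k, p k = 1)
    (E₀ : ℝ) (hE₀le : ∀ k, E₀ ≤ E k)
    (Δ : ℝ) (hΔ : IsLeast ((fun k => E k - E₀) '' {k | E₀ < E k}) Δ) (hΔpos : 0 < Δ)
    (Fbar : ℝ) (hγpos : 0 < gammaZero E p E₀) (hγlt : gammaZero E p E₀ < 1)
    (hFbarlo : gammaZero E p E₀ < Fbar) (hFbarhi : Fbar < 1)
    (β : ℝ)
    (hβ : (1 / (2 * Δ)) *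
        Real.log (Fbar * (1 - gammaZero E p E₀) / (gammaZero E p E₀ * (1 - Fbar))) ≤ β) :
    Fbar ≤ Fid E p E₀ β := by
  set γ := gammaZero E p E₀
  have hnum : 0 < Fbar * (1 - γ) := mul_pos (hγpos.trans hFbarlo) (by linarith)
  have hden : 0 < γ * (1 - Fbar) := mul_pos hγpos (by linarith)
  have hβ0 : 0 ≤ β := by
    refine le_trans (mul_nonneg (by positivity) (log_nonneg ?_)) hβ
    rw [one_le_div hden]
    nlinarith
  have hgap : ∀ k, E₀ < E k → Δ ≤ E k - E₀ := fun k hk => hΔ.2 ⟨k, hk, rfl⟩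
  calc Fbar ≤ γ / (γ + (1 - γ) * exp (-(2 * β * Δ))) :=
        le_div_add_mul_of_mul_le hγpos hγlt.le (exp_pos _).le
          (mul_exp_neg_le_of_log_div_le hnum hden hΔpos hβ)
    _ ≤ Fid E p E₀ β := div_ground_add_excited_le_fid hp hpsum hE₀le hgap hβ0 hγpos

/-- Corollary: gap-based sufficient β for target fidelity: in the spectral
setup, with some level strictly above `E₀`, spectral gap
`Δ = min {E_k − E₀ : E_k > E₀} > 0`, `0 < γ₀ < 1` and target fidelity `γ₀ < Fbar < 1`:
if `β ≥ (1/(2Δ))·log(Fbar·(1 − γ₀)/(γ₀·(1 − Fbar)))`, then `F(β) ≥ Fbar`. -/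
theorem gap_based_sufficient_beta {d : ℕ} (hd : 1 ≤ d) (E p : Fin d → ℝ)
    (hp : ∀ k, 0 ≤ p k) (hpsum : ∑ k, p k = 1)
    (E₀ : ℝ) (hE₀le : ∀ k, E₀ ≤ E k) (hE₀mem : ∃ k, E k = E₀)
    (hex : ∃ k, E₀ < E k)
    (Δ : ℝ) (hΔ : IsLeast ((fun k => E k - E₀) '' {k | E₀ < E k}) Δ) (hΔpos : 0 < Δ)
    (Fbar : ℝ) (hγpos : 0 < gammaZero E p E₀) (hγlt : gammaZero E p E₀ < 1)
    (hFbarlo : gammaZero E p E₀ < Fbar) (hFbarhi : Fbar < 1)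
    (β : ℝ)
    (hβ : (1 / (2 * Δ)) *
        Real.log (Fbar * (1 - gammaZero E p E₀) / (gammaZero E p E₀ * (1 - Fbar))) ≤ β) :
    Fbar ≤ Fid E p E₀ β :=
  gap_based_sufficient_beta_general E p hp hpsum E₀ hE₀le Δ hΔ hΔpos Fbar hγpos hγlt hFbarlo hFbarhi
    β hβ
end

section
/- (Large-β limit of the normalized block-encoded operator.) For a commuting PUBO Hamiltonian H = Σ_{μ∈ι} x_μ σ_μ with W = Σ_μ |x_μ|, the scaled imaginary-time operator converges, as β → ∞, to the product of one-term projectors: e^{−βW}·Matrix.exp(−βH) → Π_{μ∈ι} (I − sgn(x_μ)·σ_μ)/2 in matrix norm, where each factor (I − sgn(x_μ)σ_μ)/2 is a Hermitian idempotent (an orthogonal projection) and the factors pairwise commute. -/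
/-!
With `Q μ = (1 - sgn(x μ) σ μ) / 2`, the identity `|x| + x σ = 2|x| (1 - Q)` rewrites the scaled
operator as `exp (∑ μ, -2β|x μ| (1 - Q μ))`, which splits into a product of commuting factors.
Since `1 - Q μ` is idempotent, `exp (-t (1 - Q μ)) = Q μ + e^{-t} (1 - Q μ)`, which tends to `Q μ`.
-/

open NormedSpace Filter Topology

theorem Finset.noncommProd_eq_prod_toList {ι M : Type*} [Monoid M] (s : Finset ι) (f : ι → M)
    (comm : (s : Set ι).Pairwise (Function.onFun Commute f)) :
    s.noncommProd f comm = (s.toList.map f).prod := by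
  unfold Finset.noncommProd
  simp_rw [← s.coe_toList, Multiset.map_coe, Multiset.noncommProd_coe]

theorem Filter.Tendsto.finset_noncommProd {α ι M : Type*} [Monoid M] [TopologicalSpace M]
    [ContinuousMul M] {l : Filter α} {s : Finset ι} {f : ι → α → M} {g : ι → M}
    (hf : ∀ i ∈ s, Tendsto (f i) l (𝓝 (g i)))
    (hfc : ∀ a, (s : Set ι).Pairwise (Function.onFun Commute (f · a)))
    (hgc : (s : Set ι).Pairwise (Function.onFun Commute g)) :
    Tendsto (fun a => s.noncommProd (f · a) (hfc a)) l (𝓝 (s.noncommProd g hgc)) := by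
  simp only [Finset.noncommProd_eq_prod_toList]
  exact tendsto_list_prod _ fun i hi => hf i (Finset.mem_toList.mp hi)

section
variable {𝔸 : Type*} [Ring 𝔸] [Algebra ℂ 𝔸] [TopologicalSpace 𝔸] [IsTopologicalRing 𝔸]
  [ContinuousSMul ℂ 𝔸] [T2Space 𝔸]

theorem IsIdempotentElem.exp_smul {p : 𝔸} (hp : IsIdempotentElem p) (c : ℂ) :
    exp (c • p) = 1 + (Complex.exp c - 1) • p := by
  have hterm : (fun n : ℕ => (n.factorial⁻¹ : ℂ) • (c • p) ^ n) =
      fun n => ((n.factorial⁻¹ : ℂ) • c ^ n) • p + if n = 0 then 1 - p else 0 := by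
    ext (_ | n)
    · simp
    · simp [smul_pow, hp.pow_succ_eq, smul_smul]
  have hsum : HasSum (fun n : ℕ => (n.factorial⁻¹ : ℂ) • (c • p) ^ n)
      (Complex.exp c • p + (1 - p)) := by
    rw [hterm, Complex.exp_eq_exp_ℂ]
    exact ((exp_series_hasSum_exp' c).smul_const p).add (hasSum_ite_eq 0 (1 - p))
  rw [congrFun (exp_eq_tsum ℂ) (c • p), hsum.tsum_eq]
  module

theorem IsIdempotentElem.tendsto_exp_neg_smul {p : 𝔸} (hp : IsIdempotentElem p) :
    Tendsto (fun t : ℝ => exp ((-(t : ℂ)) • p)) atTop (𝓝 (1 - p)) := by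
  have hexp : Tendsto (fun t : ℝ => Complex.exp (-(t : ℂ))) atTop (𝓝 0) := by
    have h := (Complex.continuous_ofReal.tendsto 0).comp Real.tendsto_exp_neg_atTop_nhds_zero
    rw [Complex.ofReal_zero] at h
    exact h.congr fun t => by simp [Complex.ofReal_exp]
  simp only [hp.exp_smul]
  simpa [sub_eq_add_neg] using tendsto_const_nhds.add ((hexp.sub_const 1).smul_const p)

end

theorem Matrix.exp_smul_one_add {n : Type*} [Fintype n] [DecidableEq n] (c : ℂ)
    (B : Matrix n n ℂ) : exp (c • 1 + B) = Complex.exp c • exp B := by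
  rw [Matrix.exp_add_of_commute _ _ ((Commute.one_left B).smul_left c),
    IsIdempotentElem.one.exp_smul, add_mul, one_mul, smul_mul_assoc, one_mul]
  module

theorem Commute.smul_one_sub_smul_one_sub {R A : Type*} [CommSemiring R] [Ring A] [Algebra R A]
    {s t : A} (h : Commute s t) (a b : R) : Commute (a • (1 - s)) (b • (1 - t)) :=
  (((Commute.one_right _).sub_right ((Commute.one_left t).sub_left h)).smul_left a).smul_right b

theorem isIdempotentElem_inv_two_smul_one_sub {K A : Type*} [Field K] [NeZero (2 : K)] [Ring A]
    [Algebra K A] {s : A} (hs : s * s = 1) : IsIdempotentElem ((2 : K)⁻¹ • (1 - s)) := by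
  unfold IsIdempotentElem
  simp only [smul_mul_smul_comm, sub_mul, mul_sub, one_mul, mul_one, hs]
  rw [show (1 : A) - s - (s - 1) = (2 : K) • (1 - s) by module, smul_smul]
  congr 1
  field_simp

theorem div_abs_mul_div_abs_self {y : ℝ} (hy : y ≠ 0) : y / |y| * (y / |y|) = 1 := by
  rw [div_mul_div_comm, abs_mul_abs_self, div_self (mul_self_ne_zero.mpr hy)]

theorem abs_smul_one_add_smul_eq {A : Type*} [Ring A] [Algebra ℂ A] {y : ℝ} (hy : y ≠ 0)
    (s : A) : ((|y| : ℝ) : ℂ) • 1 + (y : ℂ) • s =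
      ((2 * |y| : ℝ) : ℂ) • (1 - (2 : ℂ)⁻¹ • (1 - ((y / |y| : ℝ) : ℂ) • s)) := by
  have hy' : ((y / |y| : ℝ) : ℂ) * |y| = y := by
    rw [← Complex.ofReal_mul, div_mul_cancel₀ _ (abs_ne_zero.mpr hy)]
  rw [Complex.ofReal_mul, Complex.ofReal_ofNat]
  generalize ((y / |y| : ℝ) : ℂ) = r at hy' ⊢
  linear_combination (norm := module) (-hy') • s

theorem smul_one_add_smul_sum_eq_sum_smul_one_sub {ι A : Type*} [Fintype ι] [Ring A]
    [Algebra ℂ A] {x : ι → ℝ} (hx : ∀ μ, x μ ≠ 0) (s : ι → A) (β : ℝ) :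
    ((-(β * ∑ μ, |x μ|) : ℝ) : ℂ) • 1 + (-(β : ℂ)) • ∑ μ, (x μ : ℂ) • s μ =
      ∑ μ, (-((2 * |x μ| * β : ℝ) : ℂ)) •
        (1 - (2 : ℂ)⁻¹ • (1 - ((x μ / |x μ| : ℝ) : ℂ) • s μ)) := by
  have hterm : ∀ μ, (-((2 * |x μ| * β : ℝ) : ℂ)) •
      (1 - (2 : ℂ)⁻¹ • (1 - ((x μ / |x μ| : ℝ) : ℂ) • s μ)) =
        (-(β : ℂ)) • (((|x μ| : ℝ) : ℂ) • 1 + (x μ : ℂ) • s μ) := by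
    intro μ
    rw [abs_smul_one_add_smul_eq (hx μ), smul_smul]
    congr 1
    push_cast
    ring
  simp_rw [hterm, ← Finset.smul_sum, Finset.sum_add_distrib, ← Finset.sum_smul]
  push_cast
  module

theorem Matrix.IsHermitian.inv_two_smul_one_sub_ofReal_smul {n : Type*} [DecidableEq n]
    {s : Matrix n n ℂ} (hs : s.IsHermitian) (r : ℝ) :
    ((2 : ℂ)⁻¹ • (1 - (r : ℂ) • s)).IsHermitian := by
  simp [Matrix.IsHermitian, Matrix.conjTranspose_smul, hs.eq]

theorem scaled_ite_tendsto_projector_product_general {d : ℕ} {ι : Type*} [Fintype ι]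
    (x : ι → ℝ) (hx : ∀ μ, x μ ≠ 0)
    (σ : ι → Matrix (Fin d) (Fin d) ℂ)
    (hherm : ∀ μ, (σ μ).IsHermitian)
    (hcomm : ∀ μ ν, Commute (σ μ) (σ ν))
    (hinv : ∀ μ, σ μ ^ 2 = 1)
    (hPc : ((Finset.univ : Finset ι) : Set ι).Pairwise
      (Function.onFun Commute fun μ =>
        (2 : ℂ)⁻¹ • ((1 : Matrix (Fin d) (Fin d) ℂ) - ((x μ / |x μ| : ℝ) : ℂ) • σ μ))) :
    (∀ μ, ((2 : ℂ)⁻¹ •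
        ((1 : Matrix (Fin d) (Fin d) ℂ) - ((x μ / |x μ| : ℝ) : ℂ) • σ μ)).IsHermitian ∧
      ((2 : ℂ)⁻¹ • ((1 : Matrix (Fin d) (Fin d) ℂ) - ((x μ / |x μ| : ℝ) : ℂ) • σ μ)) *
          ((2 : ℂ)⁻¹ • ((1 : Matrix (Fin d) (Fin d) ℂ) - ((x μ / |x μ| : ℝ) : ℂ) • σ μ)) =
        (2 : ℂ)⁻¹ • ((1 : Matrix (Fin d) (Fin d) ℂ) - ((x μ / |x μ| : ℝ) : ℂ) • σ μ)) ∧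
    (∀ μ ν, Commute
      ((2 : ℂ)⁻¹ • ((1 : Matrix (Fin d) (Fin d) ℂ) - ((x μ / |x μ| : ℝ) : ℂ) • σ μ))
      ((2 : ℂ)⁻¹ • ((1 : Matrix (Fin d) (Fin d) ℂ) - ((x ν / |x ν| : ℝ) : ℂ) • σ ν))) ∧
    Filter.Tendsto
      (fun β : ℝ => ((Real.exp (-(β * ∑ μ, |x μ|)) : ℝ) : ℂ) •
        NormedSpace.exp ((-(β : ℂ)) • ∑ μ, (x μ : ℂ) • σ μ))
      Filter.atTop
      (nhds (Finset.univ.noncommProd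
        (fun μ => (2 : ℂ)⁻¹ •
          ((1 : Matrix (Fin d) (Fin d) ℂ) - ((x μ / |x μ| : ℝ) : ℂ) • σ μ)) hPc)) := by
  set Q : ι → Matrix (Fin d) (Fin d) ℂ :=
    fun μ => (2 : ℂ)⁻¹ • (1 - ((x μ / |x μ| : ℝ) : ℂ) • σ μ)
  have hQidem : ∀ μ, IsIdempotentElem (Q μ) := fun μ => by
    refine isIdempotentElem_inv_two_smul_one_sub ?_
    rw [smul_mul_smul_comm, ← sq (σ μ), hinv μ, ← Complex.ofReal_mul,
      div_abs_mul_div_abs_self (hx μ), Complex.ofReal_one, one_smul]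
  have hQcomm : ∀ μ ν, Commute (Q μ) (Q ν) := fun μ ν =>
    (((hcomm μ ν).smul_left _).smul_right _).smul_one_sub_smul_one_sub _ _
  refine ⟨fun μ => ⟨(hherm μ).inv_two_smul_one_sub_ofReal_smul _, hQidem μ⟩, hQcomm, ?_⟩
  have hfac : ∀ μ, Tendsto (fun β : ℝ => exp ((-((2 * |x μ| * β : ℝ) : ℂ)) • (1 - Q μ)))
      atTop (𝓝 (Q μ)) := fun μ => by
    simpa only [sub_sub_cancel, Function.comp_def, id] using
      (hQidem μ).one_sub.tendsto_exp_neg_smul.comp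
        (tendsto_id.const_mul_atTop (mul_pos two_pos (abs_pos.mpr (hx μ))))
  refine (Tendsto.finset_noncommProd (fun μ _ => hfac μ)
      (fun β μ _ ν _ _ => ((hQcomm μ ν).smul_one_sub_smul_one_sub _ _).exp) hPc).congr
    fun β => ?_
  rw [← Matrix.exp_sum_of_commute _ _
      fun μ _ ν _ _ => (hQcomm μ ν).smul_one_sub_smul_one_sub _ _,
    ← smul_one_add_smul_sum_eq_sum_smul_one_sub hx, Matrix.exp_smul_one_add,
    ← Complex.ofReal_exp]

/-- Large-β limit of the normalized block-encoded operator: for a commuting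
PUBO Hamiltonian `H = ∑ μ, x μ • σ μ` with `W = ∑ μ, |x μ|`, each factor
`(I − sgn(x μ)·σ μ)/2` is a Hermitian idempotent (an orthogonal projection), the factors
pairwise commute, and the scaled imaginary-time operator converges as `β → ∞` to their
(order-independent) product: `e^{−βW}·exp(−βH) → ∏ μ (I − sgn(x μ)·σ μ)/2`. -/
theorem scaled_ite_tendsto_projector_product {d : ℕ} {ι : Type*} [Fintype ι] [Nonempty ι]
    (x : ι → ℝ) (hx : ∀ μ, x μ ≠ 0)
    (σ : ι → Matrix (Fin d) (Fin d) ℂ)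
    (hherm : ∀ μ, (σ μ).IsHermitian)
    (hcomm : ∀ μ ν, Commute (σ μ) (σ ν))
    (hinv : ∀ μ, σ μ ^ 2 = 1)
    (hPc : ((Finset.univ : Finset ι) : Set ι).Pairwise
      (Function.onFun Commute fun μ =>
        (2 : ℂ)⁻¹ • ((1 : Matrix (Fin d) (Fin d) ℂ) - ((x μ / |x μ| : ℝ) : ℂ) • σ μ))) :
    (∀ μ, ((2 : ℂ)⁻¹ •
        ((1 : Matrix (Fin d) (Fin d) ℂ) - ((x μ / |x μ| : ℝ) : ℂ) • σ μ)).IsHermitian ∧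
      ((2 : ℂ)⁻¹ • ((1 : Matrix (Fin d) (Fin d) ℂ) - ((x μ / |x μ| : ℝ) : ℂ) • σ μ)) *
          ((2 : ℂ)⁻¹ • ((1 : Matrix (Fin d) (Fin d) ℂ) - ((x μ / |x μ| : ℝ) : ℂ) • σ μ)) =
        (2 : ℂ)⁻¹ • ((1 : Matrix (Fin d) (Fin d) ℂ) - ((x μ / |x μ| : ℝ) : ℂ) • σ μ)) ∧
    (∀ μ ν, Commute
      ((2 : ℂ)⁻¹ • ((1 : Matrix (Fin d) (Fin d) ℂ) - ((x μ / |x μ| : ℝ) : ℂ) • σ μ))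
      ((2 : ℂ)⁻¹ • ((1 : Matrix (Fin d) (Fin d) ℂ) - ((x ν / |x ν| : ℝ) : ℂ) • σ ν))) ∧
    Filter.Tendsto
      (fun β : ℝ => ((Real.exp (-(β * ∑ μ, |x μ|)) : ℝ) : ℂ) •
        NormedSpace.exp ((-(β : ℂ)) • ∑ μ, (x μ : ℂ) • σ μ))
      Filter.atTop
      (nhds (Finset.univ.noncommProd
        (fun μ => (2 : ℂ)⁻¹ •
          ((1 : Matrix (Fin d) (Fin d) ℂ) - ((x μ / |x μ| : ℝ) : ℂ) • σ μ)) hPc)) :=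
  scaled_ite_tendsto_projector_product_general x hx σ hherm hcomm hinv hPc
end
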